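/- Let Ω be a channel on d×d complex matrices. If {(π_j, ρ_j)} and {(π'_i, ρ'_i)} are two finite ensembles of density matrices both achieving the Holevo capacity, i.e., S(Ω(ρ_av)) − Σ_j π_j S(Ω(ρ_j)) = C_Holv(Ω) = S(Ω(ρ'_av)) − Σ_i π'_i S(Ω(ρ'_i)) where ρ_av = Σ_j π_j ρ_j and ρ'_av = Σ_i π'_i ρ'_i, then Ω(ρ_av) = Ω(ρ'_av); that is, the optimal average output of a channel is unique. -/

import Mathlib

open scoped BigOperators Matrix Kronecker ComplexOrder

noncomputable section

namespace GenDep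

/-- A density matrix: positive semidefinite with trace 1. -/
def IsDensityMatrix {ι : Type*} [Fintype ι] (ρ : Matrix ι ι ℂ) : Prop :=
  ρ.PosSemidef ∧ ρ.trace = 1

/-- A unitary matrix. -/
def IsUnitary {ι : Type*} [Fintype ι] [DecidableEq ι] (V : Matrix ι ι ℂ) : Prop :=
  Vᴴ * V = 1 ∧ V * Vᴴ = 1

/-- The depolarizing channel with parameter `a` on `d × d` matrices. -/
def depolarizing (d : ℕ) (a : ℝ) (ρ : Matrix (Fin d) (Fin d) ℂ) :
    Matrix (Fin d) (Fin d) ℂ :=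
  (a : ℂ) • ρ + ((((1 : ℝ) - a : ℝ) : ℂ) / d * ρ.trace) • 1

/-- The Schatten `p`-norm, `(Tr ((AᴴA)^(p/2)))^(1/p)`, computed via the
eigenvalues of `AᴴA`. -/
def schattenNorm {ι : Type*} [Fintype ι] [DecidableEq ι] (p : ℝ) (A : Matrix ι ι ℂ) : ℝ :=
  (∑ i, ((Matrix.isHermitian_conjTranspose_mul_self A).eigenvalues i) ^ (p / 2)) ^ (1 / p)

/-- The maximal output `p`-norm of a map on matrices. -/
def maxOutputPNorm {ι : Type*} [Fintype ι] [DecidableEq ι] (p : ℝ)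
    (Φ : Matrix ι ι ℂ → Matrix ι ι ℂ) : ℝ :=
  sSup {x | ∃ ρ, IsDensityMatrix ρ ∧ x = schattenNorm p (Φ ρ)}

/-- The von Neumann entropy `-Tr (ρ log ρ)` (natural log, `0 log 0 = 0`),
computed via eigenvalues. -/
def vNEntropy {ι : Type*} [Fintype ι] [DecidableEq ι] (ρ : Matrix ι ι ℂ) : ℝ :=
  if h : ρ.IsHermitian then -∑ i, (h.eigenvalues i) * Real.log (h.eigenvalues i) else 0

/-- The minimal output entropy of a map on matrices. -/
def minOutputEntropy {ι : Type*} [Fintype ι] [DecidableEq ι]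
    (Φ : Matrix ι ι ℂ → Matrix ι ι ℂ) : ℝ :=
  sInf {x | ∃ ρ, IsDensityMatrix ρ ∧ x = vNEntropy (Φ ρ)}

/-- The tensor product `Φ ⊗ Ω` of two superoperators, acting on matrices over the
product index set (Kronecker product structure). -/
def tensorMap {ι κ : Type*} [Fintype ι] [DecidableEq ι] [Fintype κ]
    (Φ : Matrix ι ι ℂ → Matrix ι ι ℂ) (Ω : Matrix κ κ ℂ → Matrix κ κ ℂ)
    (ρ : Matrix (ι × κ) (ι × κ) ℂ) : Matrix (ι × κ) (ι × κ) ℂ :=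
  ∑ i : ι, ∑ k : ι,
    (Φ (Matrix.single i k 1)) ⊗ₖ (Ω (Matrix.of fun j l => ρ (i, j) (k, l)))

/-- Complete positivity of a map on `d × d` matrices: `id ⊗ Φ` preserves positive
semidefiniteness on every extended space. -/
def IsCompletelyPositive {d : ℕ}
    (Φ : Matrix (Fin d) (Fin d) ℂ → Matrix (Fin d) (Fin d) ℂ) : Prop :=
  ∀ n : ℕ, ∀ ρ : Matrix (Fin n × Fin d) (Fin n × Fin d) ℂ, ρ.PosSemidef →
    (tensorMap (id : Matrix (Fin n) (Fin n) ℂ → Matrix (Fin n) (Fin n) ℂ) Φ ρ).PosSemidef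

/-- A channel: a completely positive trace-preserving linear map. -/
structure IsChannel {d : ℕ}
    (Φ : Matrix (Fin d) (Fin d) ℂ → Matrix (Fin d) (Fin d) ℂ) : Prop where
  map_add : ∀ A B, Φ (A + B) = Φ A + Φ B
  map_smul : ∀ (c : ℂ) A, Φ (c • A) = c • Φ A
  trace_preserving : ∀ A, (Φ A).trace = A.trace
  cp : IsCompletelyPositive Φ

/-- The Holevo capacity of a map on matrices: the supremum over finite ensembles of
the Holevo quantity. -/
def holevoCapacity {d : ℕ}
    (Φ : Matrix (Fin d) (Fin d) ℂ → Matrix (Fin d) (Fin d) ℂ) : ℝ :=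
  sSup {x | ∃ (m : ℕ) (w : Fin m → ℝ) (ρ : Fin m → Matrix (Fin d) (Fin d) ℂ),
    (∀ j, 0 < w j) ∧ (∑ j, w j = 1) ∧ (∀ j, IsDensityMatrix (ρ j)) ∧
    x = vNEntropy (Φ (∑ j, (w j : ℂ) • ρ j)) - ∑ j, w j * vNEntropy (Φ (ρ j))}

/-- The matrix logarithm of a Hermitian matrix, via the spectral theorem, with the
convention `log 0 = 0` on the kernel (i.e. on the support for PSD matrices). -/
def matLog {ι : Type*} [Fintype ι] [DecidableEq ι] (A : Matrix ι ι ℂ) : Matrix ι ι ℂ :=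
  if h : A.IsHermitian then
    (Matrix.IsHermitian.eigenvectorUnitary h : Matrix ι ι ℂ) *
      Matrix.diagonal (fun i => (Real.log (h.eigenvalues i) : ℂ)) *
      (star (Matrix.IsHermitian.eigenvectorUnitary h : Matrix ι ι ℂ))
  else 0

/-- Real-valued quantum relative entropy `H(ρ, γ) = Tr ρ (log ρ - log γ)`. -/
def relEntropyR {ι : Type*} [Fintype ι] [DecidableEq ι] (ρ γ : Matrix ι ι ℂ) : ℝ :=
  (Matrix.trace (ρ * (matLog ρ - matLog γ))).re

open Classical in
/-- Extended-real-valued quantum relative entropy, `+∞` when the support condition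
`ker γ ⊆ ker ρ` fails. -/
def relEntropy {ι : Type*} [Fintype ι] [DecidableEq ι] (ρ γ : Matrix ι ι ℂ) : EReal :=
  if ∀ x : ι → ℂ, γ.mulVec x = 0 → ρ.mulVec x = 0 then ((relEntropyR ρ γ : ℝ) : EReal)
  else ⊤

end GenDep

/-!
Mixing two optimal ensembles with weights `1/2` gives an ensemble whose Holevo quantity exceeds
the capacity by `S(M) - S(A)/2 - S(B)/2`, where `A`, `B` are the two average outputs and
`M = A/2 + B/2`; so this gap is `≤ 0`. By strict concavity of the von Neumann entropy it is
`> 0` unless `A = B`. Strict concavity comes from Klein's inequality: the gap equals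
`D(A‖M)/2 + D(B‖M)/2`, and for eigenpairs `(λᵢ, vᵢ)` of `ρ` and `(μⱼ, uⱼ)` of `σ` with
`Tr ρ = Tr σ`, `D(ρ‖σ) = ∑ᵢⱼ |⟪vᵢ, uⱼ⟫|² (λᵢ log λᵢ - λᵢ log μⱼ - λᵢ + μⱼ)`. When
`ker σ ⊆ ker ρ` (as for `σ = M`) every term is nonnegative, and all vanish only if `λᵢ = μⱼ`
whenever `⟪vᵢ, uⱼ⟫ ≠ 0`, i.e. only if `ρ = σ`.
-/

open Matrix Real InformationTheory

namespace Matrix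

variable {n : Type*} [Fintype n]

lemma sum_normSq_apply_right [DecidableEq n] {W : Matrix n n ℂ} (hW : W ∈ unitaryGroup n ℂ)
    (i : n) : ∑ j, Complex.normSq (W i j) = 1 := by
  have h := congr_fun₂ (mem_unitaryGroup_iff.mp hW) i i
  simp only [mul_apply, star_apply, Complex.star_def, Complex.mul_conj, one_apply_eq] at h
  exact_mod_cast h

lemma sum_normSq_apply_left [DecidableEq n] {W : Matrix n n ℂ} (hW : W ∈ unitaryGroup n ℂ)
    (j : n) : ∑ i, Complex.normSq (W i j) = 1 := by
  simpa [star_apply] using sum_normSq_apply_right (Unitary.star_mem hW) j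

lemma PosSemidef.mulVec_eq_zero_of_add {𝕜 : Type*} [RCLike 𝕜] {A B : Matrix n n 𝕜}
    (hA : A.PosSemidef) (hB : B.PosSemidef) {x : n → 𝕜} (h : (A + B) *ᵥ x = 0) :
    A *ᵥ x = 0 := by
  have hq : star x ⬝ᵥ A *ᵥ x + star x ⬝ᵥ B *ᵥ x = 0 := by
    rw [← dotProduct_add, ← add_mulVec, h, dotProduct_zero]
  exact (hA.dotProduct_mulVec_zero_iff x).mp ((add_eq_zero_iff_of_nonneg
    (hA.dotProduct_mulVec_nonneg x) (hB.dotProduct_mulVec_nonneg x)).mp hq).1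

lemma PosSemidef.mulVec_eq_zero_of_smul_add_smul {A B : Matrix n n ℂ} (hA : A.PosSemidef)
    (hB : B.PosSemidef) {a b : ℝ} (ha : 0 < a) (hb : 0 ≤ b) {x : n → ℂ}
    (h : (a • A + b • B) *ᵥ x = 0) : A *ᵥ x = 0 := by
  have hax := (hA.smul ha.le).mulVec_eq_zero_of_add (hB.smul hb) h
  rwa [smul_mulVec, smul_eq_zero, or_iff_right ha.ne'] at hax

end Matrix

namespace GenDep

def kleinTerm (a b : ℝ) : ℝ := a * log a - a * log b - a + b

lemma mul_klFun_div {a b : ℝ} (ha : 0 ≤ a) (hb : 0 < b) : b * klFun (a / b) = kleinTerm a b := by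
  rcases ha.eq_or_lt with rfl | ha
  · simp [klFun, kleinTerm]
  · rw [klFun, kleinTerm, log_div ha.ne' hb.ne']
    field_simp
    ring

lemma kleinTerm_nonneg {a b : ℝ} (ha : 0 ≤ a) (hb : 0 ≤ b) (hab : b = 0 → a = 0) :
    0 ≤ kleinTerm a b := by
  rcases hb.eq_or_lt with rfl | hb
  · simp [kleinTerm, hab rfl]
  · rw [← mul_klFun_div ha hb]
    exact mul_nonneg hb.le (klFun_nonneg (div_nonneg ha hb.le))

lemma eq_of_kleinTerm_eq_zero {a b : ℝ} (ha : 0 ≤ a) (hb : 0 ≤ b) (hab : b = 0 → a = 0)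
    (h : kleinTerm a b = 0) : a = b := by
  rcases hb.eq_or_lt with rfl | hb
  · exact hab rfl
  · rw [← mul_klFun_div ha hb, mul_eq_zero, klFun_eq_zero_iff (div_nonneg ha hb.le),
      div_eq_one_iff_eq hb.ne'] at h
    exact h.resolve_left hb.ne'

variable {n : Type*} [Fintype n]

section eigenOverlap

variable [DecidableEq n]

/-- `eigenOverlap hA hB i j = |⟪vᵢ, uⱼ⟫|²` for the eigenbases `v` of `A` and `u` of `B`. -/
def eigenOverlap {A B : Matrix n n ℂ} (hA : A.IsHermitian) (hB : B.IsHermitian) (i j : n) : ℝ :=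
  Complex.normSq ((star (hA.eigenvectorUnitary : Matrix n n ℂ) * hB.eigenvectorUnitary) i j)

variable {A B : Matrix n n ℂ} (hA : A.IsHermitian) (hB : B.IsHermitian)

lemma eigenOverlap_nonneg (i j : n) : 0 ≤ eigenOverlap hA hB i j :=
  Complex.normSq_nonneg _

lemma sum_eigenOverlap_right (i : n) : ∑ j, eigenOverlap hA hB i j = 1 :=
  sum_normSq_apply_right (mul_mem (Unitary.star_mem hA.eigenvectorUnitary.2)
    hB.eigenvectorUnitary.2) i

lemma sum_eigenOverlap_left (j : n) : ∑ i, eigenOverlap hA hB i j = 1 :=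
  sum_normSq_apply_left (mul_mem (Unitary.star_mem hA.eigenvectorUnitary.2)
    hB.eigenvectorUnitary.2) j

lemma eigenOverlap_self (i j : n) : eigenOverlap hA hA i j = if i = j then 1 else 0 := by
  simp [eigenOverlap, Unitary.star_mul_self_of_mem hA.eigenvectorUnitary.2, one_apply,
    apply_ite Complex.normSq]

lemma star_mul_mul_eigenvectorUnitary_apply_self (j : n) :
    (star (hB.eigenvectorUnitary : Matrix n n ℂ) * A * hB.eigenvectorUnitary) j j =
      ∑ i, (hA.eigenvalues i : ℂ) * eigenOverlap hA hB i j := by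
  set V : Matrix n n ℂ := (hA.eigenvectorUnitary : Matrix n n ℂ)
  set U : Matrix n n ℂ := (hB.eigenvectorUnitary : Matrix n n ℂ)
  have hconj : star U * A * U =
      star (star V * U) * diagonal (fun i => (hA.eigenvalues i : ℂ)) * (star V * U) := by
    conv_lhs => rw [hA.spectral_theorem]
    simp only [Unitary.conjStarAlgAut_apply, star_mul, star_star, mul_assoc]
    rfl
  rw [hconj, mul_apply]
  refine Finset.sum_congr rfl fun i _ => ?_
  rw [mul_diagonal, star_apply, eigenOverlap, ← Complex.mul_conj, Complex.star_def]
  ring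

lemma re_trace_mul_matLog :
    (A * matLog B).trace.re =
      ∑ i, ∑ j, eigenOverlap hA hB i j * (hA.eigenvalues i * log (hB.eigenvalues j)) := by
  have htrace : (A * matLog B).trace =
      (star (hB.eigenvectorUnitary : Matrix n n ℂ) * A * hB.eigenvectorUnitary *
        diagonal (fun j => (log (hB.eigenvalues j) : ℂ))).trace := by
    rw [matLog, dif_pos hB, ← mul_assoc, trace_mul_cycle, ← mul_assoc]
  rw [htrace, Finset.sum_comm]
  simp only [trace, diag, mul_diagonal, star_mul_mul_eigenvectorUnitary_apply_self hA hB,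
    Finset.sum_mul, Complex.re_sum]
  refine Finset.sum_congr rfl fun j _ => Finset.sum_congr rfl fun i _ => ?_
  norm_cast
  ring

lemma re_trace_mul_matLog_self :
    (A * matLog A).trace.re = ∑ i, hA.eigenvalues i * log (hA.eigenvalues i) := by
  simp [re_trace_mul_matLog hA hA, eigenOverlap_self]

lemma eq_of_eigenvalues_eq_of_eigenOverlap_ne_zero
    (h : ∀ i j, eigenOverlap hA hB i j ≠ 0 → hA.eigenvalues i = hB.eigenvalues j) : A = B := by
  set V : Matrix n n ℂ := (hA.eigenvectorUnitary : Matrix n n ℂ)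
  set U : Matrix n n ℂ := (hB.eigenvectorUnitary : Matrix n n ℂ)
  set W := star V * U
  have hcomm : diagonal (fun i => (hA.eigenvalues i : ℂ)) * W =
      W * diagonal (fun j => (hB.eigenvalues j : ℂ)) := by
    ext i j
    rw [diagonal_mul, mul_diagonal]
    by_cases hW : W i j = 0
    · simp [hW]
    · rw [h i j (Complex.normSq_eq_zero.not.mpr hW), mul_comm]
  have hVW : V * W = U := by
    rw [← mul_assoc, Unitary.mul_star_self_of_mem hA.eigenvectorUnitary.2, one_mul]
  have hWU : W * star U = star V := by
    rw [mul_assoc, Unitary.mul_star_self_of_mem hB.eigenvectorUnitary.2, mul_one]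
  calc A = V * diagonal (fun i => (hA.eigenvalues i : ℂ)) * star V := hA.spectral_theorem
    _ = V * (diagonal (fun i => (hA.eigenvalues i : ℂ)) * W) * star U := by
        rw [← hWU]; simp only [mul_assoc]
    _ = V * W * diagonal (fun j => (hB.eigenvalues j : ℂ)) * star U := by
        rw [hcomm]; simp only [mul_assoc]
    _ = B := by rw [hVW]; exact hB.spectral_theorem.symm

lemma relEntropyR_eq_sum_eigenOverlap_mul_kleinTerm (htr : A.trace = B.trace) :
    relEntropyR A B = ∑ i, ∑ j, eigenOverlap hA hB i j *
      kleinTerm (hA.eigenvalues i) (hB.eigenvalues j) := by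
  have hrow (f : n → ℝ) : ∑ i, ∑ j, eigenOverlap hA hB i j * f i = ∑ i, f i := by
    simp only [← Finset.sum_mul, sum_eigenOverlap_right, one_mul]
  have hcol (f : n → ℝ) : ∑ i, ∑ j, eigenOverlap hA hB i j * f j = ∑ j, f j := by
    rw [Finset.sum_comm]
    simp only [← Finset.sum_mul, sum_eigenOverlap_left, one_mul]
  have hsum : ∑ i, hA.eigenvalues i = ∑ j, hB.eigenvalues j := by
    rw [hA.trace_eq_sum_eigenvalues, hB.trace_eq_sum_eigenvalues] at htr
    exact_mod_cast htr
  rw [relEntropyR, mul_sub, trace_sub, Complex.sub_re, re_trace_mul_matLog_self hA,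
    re_trace_mul_matLog hA hB]
  simp only [kleinTerm, mul_add, mul_sub, Finset.sum_add_distrib, Finset.sum_sub_distrib, hrow,
    hcol, hsum]
  ring

end eigenOverlap

section Klein

variable [DecidableEq n] {ρ σ : Matrix n n ℂ}

lemma eigenvalues_eq_zero_of_eigenOverlap_ne_zero (hρ : ρ.PosSemidef) (hσ : σ.PosSemidef)
    (hker : ∀ x, σ *ᵥ x = 0 → ρ *ᵥ x = 0)
    {i j : n} (hμ : hσ.1.eigenvalues j = 0) (hc : eigenOverlap hρ.1 hσ.1 i j ≠ 0) :
    hρ.1.eigenvalues i = 0 := by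
  set U : Matrix n n ℂ := (hσ.1.eigenvectorUnitary : Matrix n n ℂ)
  have hρu : ρ *ᵥ ⇑(hσ.1.eigenvectorBasis j) = 0 :=
    hker _ (by rw [hσ.1.mulVec_eigenvectorBasis, hμ, zero_smul])
  have hdiag : (star U * ρ * U) j j = 0 := by
    rw [show (star U * ρ * U) j j = ((star U * ρ * U) *ᵥ Pi.single j 1) j by simp,
      ← mulVec_mulVec, ← mulVec_mulVec, hσ.1.eigenvectorUnitary_mulVec, hρu, mulVec_zero,
      Pi.zero_apply]
  rw [star_mul_mul_eigenvectorUnitary_apply_self hρ.1 hσ.1] at hdiag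
  have hsum : ∑ i, hρ.1.eigenvalues i * eigenOverlap hρ.1 hσ.1 i j = 0 := by exact_mod_cast hdiag
  have hterm := (Finset.sum_eq_zero_iff_of_nonneg fun i _ =>
    mul_nonneg (hρ.eigenvalues_nonneg i) (eigenOverlap_nonneg hρ.1 hσ.1 i j)).mp hsum i
    (Finset.mem_univ i)
  exact (mul_eq_zero.mp hterm).resolve_right hc

lemma eigenOverlap_mul_kleinTerm_nonneg (hρ : ρ.PosSemidef) (hσ : σ.PosSemidef)
    (hker : ∀ x, σ *ᵥ x = 0 → ρ *ᵥ x = 0) (i j : n) :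
    0 ≤ eigenOverlap hρ.1 hσ.1 i j * kleinTerm (hρ.1.eigenvalues i) (hσ.1.eigenvalues j) := by
  rcases (eigenOverlap_nonneg hρ.1 hσ.1 i j).eq_or_lt with hc | hc
  · rw [← hc, zero_mul]
  · exact mul_nonneg hc.le <| kleinTerm_nonneg (hρ.eigenvalues_nonneg i)
      (hσ.eigenvalues_nonneg j) fun hμ =>
        eigenvalues_eq_zero_of_eigenOverlap_ne_zero hρ hσ hker hμ hc.ne'

theorem relEntropyR_nonneg (hρ : ρ.PosSemidef) (hσ : σ.PosSemidef) (htr : ρ.trace = σ.trace) (hker : ∀ x, σ *ᵥ x = 0 → ρ *ᵥ x = 0) :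
    0 ≤ relEntropyR ρ σ := by
  rw [relEntropyR_eq_sum_eigenOverlap_mul_kleinTerm hρ.1 hσ.1 htr]
  exact Finset.sum_nonneg fun i _ => Finset.sum_nonneg fun j _ =>
    eigenOverlap_mul_kleinTerm_nonneg hρ hσ hker i j

theorem eq_of_relEntropyR_eq_zero (hρ : ρ.PosSemidef) (hσ : σ.PosSemidef)
    (htr : ρ.trace = σ.trace) (hker : ∀ x, σ *ᵥ x = 0 → ρ *ᵥ x = 0) (h : relEntropyR ρ σ = 0) :
    ρ = σ := by
  rw [relEntropyR_eq_sum_eigenOverlap_mul_kleinTerm hρ.1 hσ.1 htr, Fintype.sum_eq_zero_iff_of_nonneg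
    fun i => Finset.sum_nonneg fun j _ => eigenOverlap_mul_kleinTerm_nonneg hρ hσ hker i j] at h
  refine eq_of_eigenvalues_eq_of_eigenOverlap_ne_zero hρ.1 hσ.1 fun i j hc => ?_
  have hterm := (Fintype.sum_eq_zero_iff_of_nonneg
    (eigenOverlap_mul_kleinTerm_nonneg hρ hσ hker i)).mp (congr_fun h i)
  exact eq_of_kleinTerm_eq_zero (hρ.eigenvalues_nonneg i) (hσ.eigenvalues_nonneg j)
    (fun hμ => eigenvalues_eq_zero_of_eigenOverlap_ne_zero hρ hσ hker hμ hc)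
    ((mul_eq_zero.mp (congr_fun hterm j)).resolve_left hc)

end Klein

section Entropy

variable [DecidableEq n]

lemma vNEntropy_eq_neg_re_trace_mul_matLog {A : Matrix n n ℂ} (hA : A.IsHermitian) :
    vNEntropy A = -(A * matLog A).trace.re := by
  rw [vNEntropy, dif_pos hA, re_trace_mul_matLog_self hA]

lemma vNEntropy_eq_sum_negMulLog {A : Matrix n n ℂ} (hA : A.IsHermitian) :
    vNEntropy A = ∑ i, negMulLog (hA.eigenvalues i) := by
  simp only [vNEntropy, dif_pos hA, negMulLog, neg_mul, Finset.sum_neg_distrib]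

lemma vNEntropy_le_card {A : Matrix n n ℂ} (hA : A.PosSemidef) :
    vNEntropy A ≤ Fintype.card n := by
  rw [vNEntropy_eq_sum_negMulLog hA.1, ← nsmul_one, ← Finset.card_univ, ← Finset.sum_const]
  exact Finset.sum_le_sum fun i _ => (negMulLog_le_one_sub_self (hA.eigenvalues_nonneg i)).trans
    (sub_le_self _ (hA.eigenvalues_nonneg i))

lemma IsDensityMatrix.vNEntropy_nonneg {ρ : Matrix n n ℂ} (hρ : IsDensityMatrix ρ) :
    0 ≤ vNEntropy ρ := by
  have hsum : ∑ i, hρ.1.1.eigenvalues i = 1 := by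
    have h := hρ.2
    rw [hρ.1.1.trace_eq_sum_eigenvalues] at h
    simpa using congrArg Complex.re h
  rw [vNEntropy_eq_sum_negMulLog hρ.1.1]
  refine Finset.sum_nonneg fun i _ => negMulLog_nonneg (hρ.1.eigenvalues_nonneg i) ?_
  exact hsum ▸ Finset.single_le_sum (fun j _ => hρ.1.eigenvalues_nonneg j) (Finset.mem_univ i)

lemma vNEntropy_smul_add_smul {A B : Matrix n n ℂ} (hA : A.IsHermitian) (hB : B.IsHermitian)
    (a b : ℝ) :
    vNEntropy (a • A + b • B) = a * vNEntropy A + b * vNEntropy B +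
      (a * relEntropyR A (a • A + b • B) + b * relEntropyR B (a • A + b • B)) := by
  have hM : (a • A + b • B).IsHermitian :=
    (hA.smul (IsSelfAdjoint.all a)).add (hB.smul (IsSelfAdjoint.all b))
  rw [vNEntropy_eq_neg_re_trace_mul_matLog hM, vNEntropy_eq_neg_re_trace_mul_matLog hA,
    vNEntropy_eq_neg_re_trace_mul_matLog hB, relEntropyR, relEntropyR]
  simp only [add_mul, smul_mul, mul_sub, trace_add, trace_smul, trace_sub, Complex.add_re,
    Complex.smul_re, Complex.sub_re, smul_eq_mul]
  ring

end Entropy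

lemma IsDensityMatrix.smul_add_smul {A B : Matrix n n ℂ} (hA : IsDensityMatrix A)
    (hB : IsDensityMatrix B) {a b : ℝ} (ha : 0 ≤ a) (hb : 0 ≤ b) (hab : a + b = 1) :
    IsDensityMatrix (a • A + b • B) :=
  ⟨(hA.1.smul ha).add (hB.1.smul hb), by
    rw [trace_add, trace_smul, trace_smul, hA.2, hB.2, ← add_smul, hab, one_smul]⟩

lemma convex_setOf_isDensityMatrix : Convex ℝ {ρ : Matrix n n ℂ | IsDensityMatrix ρ} :=
  fun _ hA _ hB _ _ ha hb hab => hA.smul_add_smul hB ha hb hab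

theorem strictConcaveOn_vNEntropy [DecidableEq n] :
    StrictConcaveOn ℝ {ρ : Matrix n n ℂ | IsDensityMatrix ρ} vNEntropy := by
  refine ⟨convex_setOf_isDensityMatrix, fun A hA B hB hne a b ha hb hab => ?_⟩
  set M := a • A + b • B
  have hM : IsDensityMatrix M := hA.smul_add_smul hB ha.le hb.le hab
  have htrA : A.trace = M.trace := hA.2.trans hM.2.symm
  have htrB : B.trace = M.trace := hB.2.trans hM.2.symm
  have hkerA : ∀ x, M *ᵥ x = 0 → A *ᵥ x = 0 := fun x =>
    hA.1.mulVec_eq_zero_of_smul_add_smul hB.1 ha hb.le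
  have hkerB : ∀ x, M *ᵥ x = 0 → B *ᵥ x = 0 := fun x hx =>
    hB.1.mulVec_eq_zero_of_smul_add_smul hA.1 hb ha.le (by rwa [add_comm])
  have hDA := relEntropyR_nonneg hA.1 hM.1 htrA hkerA
  have hDB := relEntropyR_nonneg hB.1 hM.1 htrB hkerB
  rw [vNEntropy_smul_add_smul hA.1.1 hB.1.1, smul_eq_mul, smul_eq_mul]
  by_contra hle
  have hA0 : relEntropyR A M = 0 := by nlinarith
  have hB0 : relEntropyR B M = 0 := by nlinarith
  exact hne ((eq_of_relEntropyR_eq_zero hA.1 hM.1 htrA hkerA hA0).trans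
    (eq_of_relEntropyR_eq_zero hB.1 hM.1 htrB hkerB hB0).symm)

lemma isDensityMatrix_sum_smul {ι : Type*} [Fintype ι] {w : ι → ℝ} {ρ : ι → Matrix n n ℂ}
    (hw : ∀ j, 0 ≤ w j) (hw1 : ∑ j, w j = 1) (hρ : ∀ j, IsDensityMatrix (ρ j)) :
    IsDensityMatrix (∑ j, (w j : ℂ) • ρ j) := by
  simp only [Complex.coe_smul]
  refine ⟨posSemidef_sum _ fun j _ => (hρ j).1.smul (hw j), ?_⟩
  rw [trace_sum, Finset.sum_congr rfl fun j _ => by rw [trace_smul, (hρ j).2], ← Finset.sum_smul,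
    hw1, one_smul]

structure IsEnsemble {ι : Type*} [Fintype ι] (w : ι → ℝ) (ρ : ι → Matrix n n ℂ) : Prop where
  pos : ∀ j, 0 < w j
  sum_eq_one : ∑ j, w j = 1
  isDensityMatrix : ∀ j, IsDensityMatrix (ρ j)

lemma IsEnsemble.isDensityMatrix_average {ι : Type*} [Fintype ι] {w : ι → ℝ}
    {ρ : ι → Matrix n n ℂ} (h : IsEnsemble w ρ) : IsDensityMatrix (∑ j, (w j : ℂ) • ρ j) :=
  isDensityMatrix_sum_smul (fun j => (h.pos j).le) h.sum_eq_one h.isDensityMatrix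

lemma IsEnsemble.append {m m' : ℕ} {w : Fin m → ℝ} {ρ : Fin m → Matrix n n ℂ}
    {w' : Fin m' → ℝ} {ρ' : Fin m' → Matrix n n ℂ} (h : IsEnsemble w ρ) (h' : IsEnsemble w' ρ')
    {a b : ℝ} (ha : 0 < a) (hb : 0 < b) (hab : a + b = 1) :
    IsEnsemble (Fin.append (a • w) (b • w')) (Fin.append ρ ρ') where
  pos := Fin.addCases (fun j => by simpa using mul_pos ha (h.pos j))
    (fun i => by simpa using mul_pos hb (h'.pos i))
  sum_eq_one := by simp [Fin.sum_univ_add, ← Finset.mul_sum, h.sum_eq_one, h'.sum_eq_one, hab]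
  isDensityMatrix := Fin.addCases (by simpa using h.isDensityMatrix)
    (by simpa using h'.isDensityMatrix)

section Channel

variable {d : ℕ} {Φ : Matrix (Fin d) (Fin d) ℂ → Matrix (Fin d) (Fin d) ℂ}

lemma IsChannel.isDensityMatrix (hΦ : IsChannel Φ) {ρ : Matrix (Fin d) (Fin d) ℂ}
    (hρ : IsDensityMatrix ρ) : IsDensityMatrix (Φ ρ) := by
  refine ⟨?_, by rw [hΦ.trace_preserving, hρ.2]⟩
  have hext : tensorMap (id : Matrix (Fin 1) (Fin 1) ℂ → Matrix (Fin 1) (Fin 1) ℂ) Φ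
      (ρ.submatrix Prod.snd Prod.snd) = single 0 0 1 ⊗ₖ Φ ρ := by
    simp only [tensorMap, Fin.sum_univ_one, id_eq, submatrix_apply]
    rfl
  have hpos := hΦ.cp 1 _ (hρ.1.submatrix (Prod.snd : Fin 1 × Fin d → Fin d))
  rw [hext] at hpos
  convert hpos.submatrix (fun a => ((0 : Fin 1), a))
  ext a b
  simp

def holevoQuantity (Φ : Matrix (Fin d) (Fin d) ℂ → Matrix (Fin d) (Fin d) ℂ) {m : ℕ}
    (w : Fin m → ℝ) (ρ : Fin m → Matrix (Fin d) (Fin d) ℂ) : ℝ :=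
  vNEntropy (Φ (∑ j, (w j : ℂ) • ρ j)) - ∑ j, w j * vNEntropy (Φ (ρ j))

lemma holevoQuantity_le_holevoCapacity (hΦ : IsChannel Φ) {m : ℕ} {w : Fin m → ℝ}
    {ρ : Fin m → Matrix (Fin d) (Fin d) ℂ} (h : IsEnsemble w ρ) :
    holevoQuantity Φ w ρ ≤ holevoCapacity Φ := by
  refine le_csSup ⟨Fintype.card (Fin d), ?_⟩ ⟨m, w, ρ, h.pos, h.sum_eq_one, h.isDensityMatrix, rfl⟩
  rintro x ⟨k, v, τ, hv, hv1, hτ, rfl⟩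
  have hout := (hΦ.isDensityMatrix (IsEnsemble.isDensityMatrix_average ⟨hv, hv1, hτ⟩)).1
  have hmixed : 0 ≤ ∑ j, v j * vNEntropy (Φ (τ j)) := Finset.sum_nonneg fun j _ =>
    mul_nonneg (hv j).le (hΦ.isDensityMatrix (hτ j)).vNEntropy_nonneg
  linarith [vNEntropy_le_card hout]

lemma holevoQuantity_append (hΦ : IsChannel Φ) {m m' : ℕ} (w : Fin m → ℝ)
    (ρ : Fin m → Matrix (Fin d) (Fin d) ℂ) (w' : Fin m' → ℝ)
    (ρ' : Fin m' → Matrix (Fin d) (Fin d) ℂ) (a b : ℝ) :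
    holevoQuantity Φ (Fin.append (a • w) (b • w')) (Fin.append ρ ρ') =
      a * holevoQuantity Φ w ρ + b * holevoQuantity Φ w' ρ' +
        (vNEntropy (a • Φ (∑ j, (w j : ℂ) • ρ j) + b • Φ (∑ i, (w' i : ℂ) • ρ' i)) -
          (a * vNEntropy (Φ (∑ j, (w j : ℂ) • ρ j)) +
            b * vNEntropy (Φ (∑ i, (w' i : ℂ) • ρ' i)))) := by
  have hinput : ∑ k, ((Fin.append (a • w) (b • w') k : ℝ) : ℂ) • Fin.append ρ ρ' k =
      (a : ℂ) • ∑ j, (w j : ℂ) • ρ j + (b : ℂ) • ∑ i, (w' i : ℂ) • ρ' i := by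
    simp [Fin.sum_univ_add, Finset.smul_sum, smul_smul]
  rw [holevoQuantity, holevoQuantity, holevoQuantity, hinput, hΦ.map_add, hΦ.map_smul,
    hΦ.map_smul, Complex.coe_smul, Complex.coe_smul]
  simp only [Fin.sum_univ_add, Fin.append_left, Fin.append_right, Pi.smul_apply, smul_eq_mul,
    mul_assoc, ← Finset.mul_sum]
  ring

end Channel

end GenDep

open GenDep in
/-- the optimal average output of a channel is unique: any two finite
ensembles achieving the Holevo capacity have the same average output. -/
theorem stmt_15 {d : ℕ}
    (Ω : Matrix (Fin d) (Fin d) ℂ → Matrix (Fin d) (Fin d) ℂ) (hΩ : IsChannel Ω)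
    {N N' : ℕ} (w : Fin N → ℝ) (ρ : Fin N → Matrix (Fin d) (Fin d) ℂ)
    (w' : Fin N' → ℝ) (ρ' : Fin N' → Matrix (Fin d) (Fin d) ℂ)
    (hw : ∀ j, 0 < w j) (hw1 : ∑ j, w j = 1) (hρ : ∀ j, IsDensityMatrix (ρ j))
    (hw' : ∀ i, 0 < w' i) (hw'1 : ∑ i, w' i = 1) (hρ' : ∀ i, IsDensityMatrix (ρ' i))
    (hach : vNEntropy (Ω (∑ j, (w j : ℂ) • ρ j)) - ∑ j, w j * vNEntropy (Ω (ρ j)) =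
      holevoCapacity Ω)
    (hach' : vNEntropy (Ω (∑ i, (w' i : ℂ) • ρ' i)) - ∑ i, w' i * vNEntropy (Ω (ρ' i)) =
      holevoCapacity Ω) :
    Ω (∑ j, (w j : ℂ) • ρ j) = Ω (∑ i, (w' i : ℂ) • ρ' i) := by
  have hE : IsEnsemble w ρ := ⟨hw, hw1, hρ⟩
  have hE' : IsEnsemble w' ρ' := ⟨hw', hw'1, hρ'⟩
  have hχ : holevoQuantity Ω w ρ = holevoCapacity Ω := hach
  have hχ' : holevoQuantity Ω w' ρ' = holevoCapacity Ω := hach'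
  have hhalf : (0 : ℝ) < 1 / 2 := by norm_num
  have hmix := holevoQuantity_le_holevoCapacity hΩ (hE.append hE' hhalf hhalf (by norm_num))
  rw [holevoQuantity_append hΩ] at hmix
  by_contra hne
  have hconcave := strictConcaveOn_vNEntropy.2 (hΩ.isDensityMatrix hE.isDensityMatrix_average)
    (hΩ.isDensityMatrix hE'.isDensityMatrix_average) hne hhalf hhalf (by norm_num)
  rw [smul_eq_mul, smul_eq_mul] at hconcave
  linarith
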